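/- arXiv:1305.5384 — 3 statements merged into one kernel-verified Lean document; each statement's English description precedes it below -/
import Mathlib

section
/- Let c₁, c₂, c₃ ∈ [-1,1] be the correlators ⟨0⟩₁, ⟨0⟩₂, ⟨1⟩₃ of a tripartite no-signalling probability distribution maximally violating the three-party Mermin inequality (i.e., with ⟨001⟩ = ⟨010⟩ = ⟨100⟩ = 1 and ⟨111⟩ = -1). Then c₁ + c₂ + c₃ ≤ 1. -/
/-- Outcomes `±1` are encoded by `Bool`: `true ↦ -1`, `false ↦ +1`;
inputs `{0,1}` are encoded by `Bool`: `false ↦ 0`, `true ↦ 1`. -/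
noncomputable def sgn (b : Bool) : ℝ := if b then -1 else 1

/-- The correlator of `P` over the set of parties `S`. -/
noncomputable def corr {N : ℕ} (P : (Fin N → Bool) → ℝ) (S : Finset (Fin N)) : ℝ :=
  ∑ a : Fin N → Bool, P a * ∏ i ∈ S, sgn (a i)

/-- A probability distribution on outcome strings. -/
def IsProb {N : ℕ} (P : (Fin N → Bool) → ℝ) : Prop :=
  (∀ a, 0 ≤ P a) ∧ ∑ a : Fin N → Bool, P a = 1

/-- An `N`-party no-signalling box: `P x` is a distribution for every input `x`, and
the marginal on any set `S` of parties depends only on the inputs of parties in `S`. -/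
def IsNSBox {N : ℕ} (P : (Fin N → Bool) → (Fin N → Bool) → ℝ) : Prop :=
  (∀ x, IsProb (P x)) ∧
  ∀ (x y : Fin N → Bool) (S : Finset (Fin N)), (∀ i ∈ S, x i = y i) →
    ∀ a : Fin N → Bool,
      ∑ b ∈ Finset.univ.filter (fun b : Fin N → Bool => ∀ i ∈ S, b i = a i), P x b
        = ∑ b ∈ Finset.univ.filter (fun b : Fin N → Bool => ∀ i ∈ S, b i = a i), P y b

/-!
Maximal violation makes the parity `a₁a₂a₃` deterministic at the inputs `100`, `010` and `111`,
so there each two-party correlator equals `±` the remaining one-party correlator. No-signalling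
moves these identities to the input `110` and to the marginals `⟨0⟩₁, ⟨0⟩₂, ⟨1⟩₃`. At input `110`
the probability of the outcomes `(+,+,-)` and `(-,-,+)` is
`(1 + ⟨A₁A₂⟩ - ⟨A₁A₃⟩ - ⟨A₂A₃⟩) / 4 = (1 - ⟨0⟩₁ - ⟨0⟩₂ - ⟨1⟩₃) / 4`, which is nonnegative.
-/

open Finset

lemma abs_sgn (b : Bool) : |sgn b| = 1 := by
  cases b <;> simp [sgn]

lemma sgn_mul_self (b : Bool) : sgn b * sgn b = 1 := by
  cases b <;> simp [sgn]

section

variable {N : ℕ}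

noncomputable def parity (S : Finset (Fin N)) (a : Fin N → Bool) : ℝ :=
  ∏ i ∈ S, sgn (a i)

lemma corr_eq_sum_mul_parity (Q : (Fin N → Bool) → ℝ) (S : Finset (Fin N)) :
    corr Q S = ∑ a, Q a * parity S a :=
  rfl

lemma abs_parity (S : Finset (Fin N)) (a : Fin N → Bool) : |parity S a| = 1 := by
  simp [parity, abs_prod, abs_sgn]

lemma parity_congr {S : Finset (Fin N)} {a b : Fin N → Bool} (h : ∀ i ∈ S, a i = b i) :
    parity S a = parity S b :=
  prod_congr rfl fun i hi => by rw [h i hi]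

lemma parity_mul_parity (S T : Finset (Fin N)) (a : Fin N → Bool) :
    parity S a * parity T a = parity (symmDiff S T) a := by
  have hpad (U : Finset (Fin N)) : parity U a = ∏ i, if i ∈ U then sgn (a i) else 1 := by
    rw [prod_ite_mem, univ_inter, parity]
  simp only [hpad, ← prod_mul_distrib]
  refine prod_congr rfl fun i _ => ?_
  by_cases hS : i ∈ S <;> by_cases hT : i ∈ T <;> simp [hS, hT, mem_symmDiff, sgn_mul_self]

lemma IsProb.corr_empty {Q : (Fin N → Bool) → ℝ} (hQ : IsProb Q) : corr Q ∅ = 1 := by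
  simpa [corr] using hQ.2

lemma corr_add_corr_le {Q : (Fin N → Bool) → ℝ} (hQ : ∀ a, 0 ≤ Q a) (S T : Finset (Fin N)) :
    corr Q S + corr Q T ≤ corr Q ∅ + corr Q (symmDiff S T) := by
  have hnonneg : 0 ≤ ∑ a, Q a * ((1 - parity S a) * (1 - parity T a)) := by
    refine sum_nonneg fun a _ => mul_nonneg (hQ a) (mul_nonneg ?_ ?_) <;>
      linarith [le_abs_self (parity S a), le_abs_self (parity T a), abs_parity S a,
        abs_parity T a]
  have hexpand : ∑ a, Q a * ((1 - parity S a) * (1 - parity T a))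
      = corr Q ∅ + corr Q (symmDiff S T) - corr Q S - corr Q T := by
    simp only [corr_eq_sum_mul_parity, ← sum_add_distrib, ← sum_sub_distrib]
    refine sum_congr rfl fun a _ => ?_
    rw [← parity_mul_parity, show parity ∅ a = 1 from prod_empty]
    ring
  linarith

/-- A correlator of modulus one makes the parity on `T` almost surely constant. -/
lemma IsProb.corr_eq_mul_corr_symmDiff {Q : (Fin N → Bool) → ℝ} (hQ : IsProb Q)
    {T : Finset (Fin N)} (hT : |corr Q T| = 1) (S : Finset (Fin N)) :
    corr Q S = corr Q T * corr Q (symmDiff S T) := by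
  set ε := corr Q T with hε
  have hdefect : ∑ a, Q a * (1 - ε * parity T a) = 0 := by
    have : ε * ε = 1 := by rw [← sq, ← sq_abs, hT, one_pow]
    simp only [mul_sub, mul_one, sum_sub_distrib, hQ.2, mul_left_comm _ ε, ← mul_sum,
      ← corr_eq_sum_mul_parity, ← hε, this, sub_self]
  have hterm_nonneg (a : Fin N → Bool) : 0 ≤ Q a * (1 - ε * parity T a) := by
    refine mul_nonneg (hQ.1 a) (sub_nonneg.2 ?_)
    calc ε * parity T a ≤ |ε * parity T a| := le_abs_self _
      _ = 1 := by rw [abs_mul, hT, abs_parity, one_mul]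
  have hzero := (sum_eq_zero_iff_of_nonneg fun a _ => hterm_nonneg a).1 hdefect
  calc corr Q S = ∑ a, Q a * parity S a := rfl
    _ = ∑ a, ε * (Q a * (parity S a * parity T a)) :=
        sum_congr rfl fun a _ => by linear_combination parity S a * hzero a (mem_univ a)
    _ = ε * corr Q (symmDiff S T) := by
        simp only [parity_mul_parity, ← mul_sum, corr_eq_sum_mul_parity]

lemma corr_eq_of_marginal_eq {Q Q' : (Fin N → Bool) → ℝ} {S : Finset (Fin N)}
    (h : ∀ a : Fin N → Bool, ∑ b ∈ univ.filter (fun b : Fin N → Bool => ∀ i ∈ S, b i = a i), Q b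
      = ∑ b ∈ univ.filter (fun b : Fin N → Bool => ∀ i ∈ S, b i = a i), Q' b) :
    corr Q S = corr Q' S := by
  classical
  let proj (b : Fin N → Bool) : Fin N → Bool := S.piecewise b fun _ => false
  have proj_agree (b : Fin N → Bool) : ∀ i ∈ S, proj b i = b i := fun i hi =>
    S.piecewise_eq_of_mem _ _ hi
  have proj_eq_proj_iff (b c : Fin N → Bool) : proj b = proj c ↔ ∀ i ∈ S, b i = proj c i := by
    refine ⟨fun h i hi => by rw [← proj_agree b i hi, h], fun h => ?_⟩
    exact S.piecewise_congr (fun i hi => (h i hi).trans (proj_agree c i hi)) fun _ _ => rfl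
  have hfiber (R : (Fin N → Bool) → ℝ) : corr R S = ∑ c ∈ univ.image proj,
      (∑ b ∈ univ.filter (fun b : Fin N → Bool => ∀ i ∈ S, b i = c i), R b) * parity S c := by
    rw [corr_eq_sum_mul_parity,
      ← sum_fiberwise_of_maps_to fun b _ => mem_image_of_mem proj (mem_univ b)]
    refine sum_congr rfl fun c hc => ?_
    obtain ⟨c, -, rfl⟩ := mem_image.1 hc
    rw [sum_mul]
    refine sum_congr (filter_congr fun b _ => proj_eq_proj_iff b c) fun b hb => ?_
    rw [parity_congr (mem_filter.1 hb).2]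
  rw [hfiber Q, hfiber Q']
  exact sum_congr rfl fun c _ => by rw [h]

lemma IsNSBox.corr_eq {P : (Fin N → Bool) → (Fin N → Bool) → ℝ} (hP : IsNSBox P)
    {x y : Fin N → Bool} {S : Finset (Fin N)} (hxy : ∀ i ∈ S, x i = y i) :
    corr (P x) S = corr (P y) S :=
  corr_eq_of_marginal_eq (hP.2 x y S hxy)

lemma IsNSBox.corr_eq_mul_corr_symmDiff {P : (Fin N → Bool) → (Fin N → Bool) → ℝ}
    (hP : IsNSBox P) {x y z : Fin N → Bool} {S T : Finset (Fin N)} (hT : |corr (P y) T| = 1)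
    (hxy : ∀ i ∈ S, x i = y i) (hyz : ∀ i ∈ symmDiff S T, y i = z i) :
    corr (P x) S = corr (P y) T * corr (P z) (symmDiff S T) := by
  rw [hP.corr_eq hxy, (hP.1 y).corr_eq_mul_corr_symmDiff hT S, hP.corr_eq hyz]

end

theorem mermin_marginal_bound_general (P : (Fin 3 → Bool) → (Fin 3 → Bool) → ℝ)
    (hP : IsNSBox P)
    (h010 : corr (P ![false, true, false]) Finset.univ = 1)
    (h100 : corr (P ![true, false, false]) Finset.univ = 1)
    (h111 : corr (P ![true, true, true]) Finset.univ = -1) :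
    corr (P ![false, false, true]) {0} + corr (P ![false, false, true]) {1}
      + corr (P ![false, false, true]) {2} ≤ 1 := by
  have hpos := corr_add_corr_le (hP.1 ![true, true, false]).1 {0, 2} {1, 2}
  have h02 : corr (P ![true, true, false]) {0, 2} = corr (P ![false, false, true]) {1} := by
    rw [hP.corr_eq_mul_corr_symmDiff (y := ![true, false, false]) (T := univ)
      (z := ![false, false, true]) (by rw [h100]; norm_num) (by decide) (by decide), h100, one_mul]
    rfl
  have h12 : corr (P ![true, true, false]) {1, 2} = corr (P ![false, false, true]) {0} := by
    rw [hP.corr_eq_mul_corr_symmDiff (y := ![false, true, false]) (T := univ)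
      (z := ![false, false, true]) (by rw [h010]; norm_num) (by decide) (by decide), h010, one_mul]
    rfl
  have h01 : corr (P ![true, true, false]) (symmDiff {0, 2} {1, 2})
      = -corr (P ![false, false, true]) {2} := by
    rw [hP.corr_eq_mul_corr_symmDiff (y := ![true, true, true]) (T := univ)
      (z := ![false, false, true]) (by rw [h111]; norm_num) (by decide) (by decide), h111,
      neg_one_mul]
    rfl
  rw [(hP.1 _).corr_empty, h02, h12, h01] at hpos
  linarith

/-- For a tripartite no-signalling box maximally violating the Mermin inequality,
the marginal correlators `⟨0⟩₁ + ⟨0⟩₂ + ⟨1⟩₃ ≤ 1`. -/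
theorem mermin_marginal_bound (P : (Fin 3 → Bool) → (Fin 3 → Bool) → ℝ)
    (hP : IsNSBox P)
    (h001 : corr (P ![false, false, true]) Finset.univ = 1)
    (h010 : corr (P ![false, true, false]) Finset.univ = 1)
    (h100 : corr (P ![true, false, false]) Finset.univ = 1)
    (h111 : corr (P ![true, true, true]) Finset.univ = -1) :
    corr (P ![false, false, true]) {0} + corr (P ![false, false, true]) {1}
      + corr (P ![false, false, true]) {2} ≤ 1 :=
  mermin_marginal_bound_general P hP h010 h100 h111
end

section
/- Let P be a probability distribution on {+1,-1}^N (N odd) with ⟨a₁⋯a_N⟩ = +1. Then P(a) = 2^{-(N-1)}·∑_{S: |S| ≤ (N-1)/2} (∏_{i∈S} a_i)·⟨∏_{i∈S}⟩ for all a with ∏_i a_i = +1, i.e., P is determined on its support by its correlators of order at most (N-1)/2. -/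
/-!
On the support of `P` every string has even parity, so both the character
`χ_S(a) = ∏ i ∈ S, sgn (a i)` of an even-parity `a` and the correlator `⟨χ_S⟩` are invariant
under `S ↦ Sᶜ`. In the Fourier inversion formula `2 ^ N * P a = ∑ S, χ_S(a) * ⟨χ_S⟩` the terms
of `S` and `Sᶜ` therefore agree, and as `N` is odd exactly one of `S`, `Sᶜ` has at most
`(N - 1) / 2` elements.
-/

open Finset

lemma sgn_mul_sgn_add_one (b c : Bool) : sgn b * sgn c + 1 = if b = c then 2 else 0 := by
  cases b <;> cases c <;> norm_num [sgn]

section Parity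

variable {ι : Type*}

lemma prod_sgn_mul_self (a : ι → Bool) (S : Finset ι) :
    (∏ i ∈ S, sgn (a i)) * ∏ i ∈ S, sgn (a i) = 1 := by
  rw [← prod_mul_distrib]
  exact prod_eq_one fun i _ => sgn_mul_self (a i)

lemma prod_sgn_eq_one_or_eq_neg_one (a : ι → Bool) (S : Finset ι) :
    (∏ i ∈ S, sgn (a i)) = 1 ∨ (∏ i ∈ S, sgn (a i)) = -1 :=
  mul_self_eq_one_iff.mp (prod_sgn_mul_self a S)

lemma prod_compl_sgn [Fintype ι] [DecidableEq ι] (a : ι → Bool) (S : Finset ι) :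
    ∏ i ∈ Sᶜ, sgn (a i) = (∏ i ∈ S, sgn (a i)) * ∏ i, sgn (a i) := by
  rw [← prod_mul_prod_compl S, ← mul_assoc, prod_sgn_mul_self, one_mul]

lemma sum_prod_sgn_mul_sgn [Fintype ι] (a b : ι → Bool) :
    ∑ S : Finset ι, ∏ i ∈ S, sgn (a i) * sgn (b i) =
      if a = b then (2 : ℝ) ^ Fintype.card ι else 0 := by
  rw [← powerset_univ, ← prod_add_one]
  simp_rw [sgn_mul_sgn_add_one]
  split_ifs with hab
  · simp [hab]
  · obtain ⟨i, hi⟩ := Function.ne_iff.mp hab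
    exact prod_eq_zero (mem_univ i) (if_neg hi)

end Parity

section Correlators

variable {N : ℕ}

lemma sum_prod_sgn_mul_corr (P : (Fin N → Bool) → ℝ) (a : Fin N → Bool) :
    ∑ S, (∏ i ∈ S, sgn (a i)) * corr P S = 2 ^ N * P a := by
  calc ∑ S, (∏ i ∈ S, sgn (a i)) * corr P S
      = ∑ b, P b * ∑ S : Finset (Fin N), ∏ i ∈ S, sgn (a i) * sgn (b i) := by
        simp_rw [corr, mul_sum, prod_mul_distrib]
        rw [sum_comm]
        exact sum_congr rfl fun b _ => sum_congr rfl fun S _ => by ring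
    _ = 2 ^ N * P a := by simp [sum_prod_sgn_mul_sgn, mul_comm]

lemma IsProb.eq_zero_of_prod_sgn_eq_neg_one {P : (Fin N → Bool) → ℝ} (hP : IsProb P)
    (hfull : corr P univ = 1) {b : Fin N → Bool} (hb : ∏ i, sgn (b i) = -1) : P b = 0 := by
  obtain ⟨hnonneg, hsum⟩ := hP
  have hdefect : ∑ c, P c * (1 - ∏ i, sgn (c i)) = 0 := by
    rw [corr] at hfull
    simp only [mul_sub, mul_one, sum_sub_distrib, hsum, hfull, sub_self]
  have hterm_nonneg : ∀ c ∈ univ, 0 ≤ P c * (1 - ∏ i, sgn (c i)) := fun c _ => by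
    rcases prod_sgn_eq_one_or_eq_neg_one c univ with h | h <;> rw [h] <;> linarith [hnonneg c]
  have hb_term := (sum_eq_zero_iff_of_nonneg hterm_nonneg).mp hdefect b (mem_univ b)
  rw [hb] at hb_term
  linarith

lemma corr_compl {P : (Fin N → Bool) → ℝ}
    (hP : ∀ b : Fin N → Bool, ∏ i, sgn (b i) = -1 → P b = 0) (S : Finset (Fin N)) :
    corr P Sᶜ = corr P S := by
  refine sum_congr rfl fun b _ => ?_
  rw [prod_compl_sgn]
  rcases prod_sgn_eq_one_or_eq_neg_one b univ with h | h
  · rw [h, mul_one]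
  · rw [hP b h, zero_mul, zero_mul]

end Correlators

lemma sum_eq_two_nsmul_sum_card_le_of_compl {α M : Type*} [Fintype α] [DecidableEq α]
    [AddCommMonoid M] (hodd : Odd (Fintype.card α)) (F : Finset α → M)
    (hF : ∀ S, F Sᶜ = F S) :
    ∑ S, F S = 2 • ∑ S ∈ univ.filter (fun S : Finset α => S.card ≤ (Fintype.card α - 1) / 2),
      F S := by
  set m := (Fintype.card α - 1) / 2
  have hcard : ∀ S : Finset α, S.card + Sᶜ.card = 2 * m + 1 := fun S => by
    obtain ⟨k, hk⟩ := hodd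
    rw [card_add_card_compl]
    omega
  have hhigh : ∑ S ∈ univ.filter (fun S : Finset α => ¬ S.card ≤ m), F S =
      ∑ S ∈ univ.filter (fun S : Finset α => S.card ≤ m), F S := by
    refine sum_nbij' compl compl ?_ ?_ (fun S _ => compl_compl S) (fun S _ => compl_compl S)
      fun S _ => (hF S).symm
    all_goals
      intro S hS
      simp only [mem_filter, mem_univ, true_and] at hS ⊢
      have := hcard S
      omega
  rw [← sum_filter_add_sum_filter_not univ (fun S : Finset α => S.card ≤ m), hhigh, two_nsmul]

/-- If the full correlator equals `1` (N odd), then on its support `P` is determined by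
its correlators of order at most `(N-1)/2`. -/
theorem support_determined_by_low_order_correlators (N : ℕ) (hodd : Odd N)
    (P : (Fin N → Bool) → ℝ) (hP : IsProb P) (hfull : corr P Finset.univ = 1) :
    ∀ a : Fin N → Bool, (∏ i, sgn (a i)) = 1 →
      P a = (2 : ℝ) ^ (-(N - 1 : ℤ)) *
        ∑ S ∈ Finset.univ.filter (fun S : Finset (Fin N) => S.card ≤ (N - 1) / 2),
          (∏ i ∈ S, sgn (a i)) * corr P S := by
  intro a ha
  have hcompl : ∀ S : Finset (Fin N),
      (∏ i ∈ Sᶜ, sgn (a i)) * corr P Sᶜ = (∏ i ∈ S, sgn (a i)) * corr P S := fun S => by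
    rw [prod_compl_sgn, ha, mul_one,
      corr_compl (fun b => hP.eq_zero_of_prod_sgn_eq_neg_one hfull)]
  have hsplit := sum_eq_two_nsmul_sum_card_le_of_compl (by simpa using hodd)
    (fun S => (∏ i ∈ S, sgn (a i)) * corr P S) hcompl
  rw [sum_prod_sgn_mul_corr, Fintype.card_fin, nsmul_eq_mul] at hsplit
  obtain ⟨k, rfl⟩ := hodd
  simp only [Nat.add_sub_cancel, Nat.mul_div_cancel_left k two_pos] at hsplit ⊢
  rw [Nat.cast_ofNat, pow_succ', mul_assoc] at hsplit
  rw [← mul_left_cancel₀ two_ne_zero hsplit, ← mul_assoc, ← zpow_natCast, ← zpow_add₀ two_ne_zero]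
  push_cast
  simp
end

section
/- For odd N ≥ 3 and 0 ≤ i ≤ (N-1)/2, define β_i = (-1)^{(N-i)/2} if i is odd and β_i = (-1)^{i/2} if i is even. Then for all such i, β_i equals 2^{-(N-3)/2}·h_N·α_i', where α_i' are as defined from the inclusion–exclusion counting coefficients α_i (with α_0' = α_0 - 2^{N-2}) and h_N = √2·cos(π(N+4)/4). That is, the coefficient vectors (β_i) and (h_N·α_i') are proportional with positive proportionality constant 2^{(N-3)/2}. -/
/-- `h_N = √2 · cos(π(N+4)/4)`. -/
noncomputable def hN (N : ℕ) : ℝ := Real.sqrt 2 * Real.cos (Real.pi * (N + 4) / 4)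

/-- `α_i = ∑_{r=0}^{i} (-1)^r C(i,r) ∑_{j ≥ 0} C(N-i, 4j+2-r)` where the inner sum
ranges over all `j` with `0 ≤ 4j+2-r` (terms with `4j+2-r > N-i` vanish). -/
def alpha (N i : ℕ) : ℤ :=
  ∑ r ∈ Finset.range (i + 1), (-1) ^ r * (i.choose r) *
    ∑ j ∈ Finset.range (N + 1), if r ≤ 4 * j + 2 then ((N - i).choose (4 * j + 2 - r) : ℤ) else 0

/-- `α_0' = α_0 - 2^{N-2}` and `α_i' = α_i` for `i ≥ 1`. -/
def alpha' (N i : ℕ) : ℤ := if i = 0 then alpha N 0 - 2 ^ (N - 2) else alpha N i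

/-- `β_i = (-1)^{(N-i)/2}` for odd `i`, `β_i = (-1)^{i/2}` for even `i`. -/
noncomputable def beta (N i : ℕ) : ℝ :=
  if Odd i then (-1 : ℝ) ^ ((N - i) / 2) else (-1 : ℝ) ^ (i / 2)

/-!
Roots-of-unity filter: `4 ∑_{k ≡ 2 - r (mod 4)} C(M, k) = ∑_{t < 4} I^{t(r+2)} (1 + I^t)^M`,
so the binomial theorem turns `4 α_i` into `∑_{t < 4} (-1)^t (1 + I^t)^{N-i} (1 - I^t)^i`.
The `t = 0` term is the `2^N` removed in `α_0'`, the `t = 2` term vanishes, and the `t = 1, 3`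
terms are complex conjugates; as `(1 + I)(1 - I) = 2` and `(1 + I)^2 = 2I`, they give
`α_i' = -2^{(N-3)/2} Re(I^q (1 + I))` with `q = (N-1)/2 - i`. Likewise `h_N = -Re(I^k (1 + I))`
with `k = (N-1)/2`, and `β_i` is the product of these two period-4 signs.
-/

open Complex ComplexConjugate Finset

theorem IsPrimitiveRoot.sum_pow_mul_eq_ite {R : Type*} [CommRing R] [IsDomain R] {ζ : R} {k : ℕ}
    (hζ : IsPrimitiveRoot ζ k) (n : ℕ) :
    ∑ t ∈ range k, ζ ^ (t * n) = if k ∣ n then (k : R) else 0 := by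
  simp only [mul_comm _ n, pow_mul]
  split_ifs with hdvd
  · simp [(hζ.pow_eq_one_iff_dvd n).mpr hdvd]
  · have hne : ζ ^ n - 1 ≠ 0 := sub_ne_zero.mpr (mt (hζ.pow_eq_one_iff_dvd n).mp hdvd)
    apply (mul_left_inj' hne).mp
    rw [geom_sum_mul, ← pow_mul, mul_comm, pow_mul, hζ.pow_eq_one, one_pow, sub_self, zero_mul]

def residueChooseSum (N M r : ℕ) : ℤ :=
  ∑ j ∈ range (N + 1), if r ≤ 4 * j + 2 then (M.choose (4 * j + 2 - r) : ℤ) else 0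

lemma alpha_eq_sum_residueChooseSum (N i : ℕ) :
    alpha N i = ∑ r ∈ range (i + 1), (-1) ^ r * i.choose r * residueChooseSum N (N - i) r :=
  rfl

lemma residueChooseSum_succ (N M r : ℕ) :
    residueChooseSum N (M + 1) r = residueChooseSum N M r + residueChooseSum N M (r + 1) := by
  simp only [residueChooseSum, ← sum_add_distrib]
  refine sum_congr rfl fun j _ => ?_
  rcases lt_trichotomy r (4 * j + 2) with h | rfl | h
  · obtain ⟨m, hm⟩ : ∃ m, 4 * j + 2 - r = m + 1 := ⟨4 * j + 1 - r, by omega⟩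
    rw [if_pos (by omega), if_pos (by omega), if_pos (by omega), hm,
      show 4 * j + 2 - (r + 1) = m by omega, Nat.choose_succ_succ', Nat.cast_add, add_comm]
  · simp
  · rw [if_neg (by omega), if_neg (by omega), if_neg (by omega), add_zero]

lemma residueChooseSum_zero {N r : ℕ} (hr : r ≤ 4 * N + 2) :
    residueChooseSum N 0 r = if 4 ∣ r + 2 then 1 else 0 := by
  have hterm (j : ℕ) : (if r ≤ 4 * j + 2 then ((Nat.choose 0 (4 * j + 2 - r)) : ℤ) else 0)
      = if 4 * j + 2 = r then 1 else 0 := by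
    split_ifs
    · simp [show 4 * j + 2 - r = 0 by omega]
    · exact_mod_cast Nat.choose_eq_zero_of_lt (by omega)
    · omega
    · rfl
  simp only [residueChooseSum, hterm]
  rw [sum_eq_single (r / 4) (fun j _ hj => if_neg (by omega))
    (fun h => absurd (mem_range.mpr (by omega)) h)]
  exact if_congr (by omega) rfl rfl

lemma four_mul_residueChooseSum {N M r : ℕ} (h : r + M ≤ 4 * N + 2) :
    4 * (residueChooseSum N M r : ℂ) =
      ∑ t ∈ range 4, I ^ (t * (r + 2)) * (1 + I ^ t) ^ M := by
  induction M generalizing r with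
  | zero =>
    rw [residueChooseSum_zero (by omega)]
    simp only [pow_zero, mul_one]
    rw [isPrimitiveRoot_I.sum_pow_mul_eq_ite]
    split_ifs <;> simp
  | succ M ih =>
    rw [residueChooseSum_succ, Int.cast_add, mul_add, ih (by omega), ih (by omega),
      ← sum_add_distrib]
    refine sum_congr rfl fun t _ => ?_
    ring

lemma four_mul_alpha {N i : ℕ} (hi : i ≤ N) :
    4 * (alpha N i : ℂ) =
      ∑ t ∈ range 4, I ^ (2 * t) * (1 + I ^ t) ^ (N - i) * (1 - I ^ t) ^ i := by
  rw [alpha_eq_sum_residueChooseSum]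
  push_cast
  calc 4 * ∑ r ∈ range (i + 1), (-1) ^ r * (i.choose r : ℂ) * residueChooseSum N (N - i) r
      = ∑ r ∈ range (i + 1), ∑ t ∈ range 4,
          (-1) ^ r * (i.choose r : ℂ) * (I ^ (t * (r + 2)) * (1 + I ^ t) ^ (N - i)) := by
        rw [mul_sum]
        refine sum_congr rfl fun r hr => ?_
        rw [← mul_sum, ← four_mul_residueChooseSum (N := N) (by rw [mem_range] at hr; omega)]
        ring
    _ = ∑ t ∈ range 4, I ^ (2 * t) * (1 + I ^ t) ^ (N - i) *
          ∑ r ∈ range (i + 1), (-I ^ t) ^ r * 1 ^ (i - r) * i.choose r := by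
        rw [sum_comm]
        refine sum_congr rfl fun t _ => ?_
        rw [mul_sum]
        refine sum_congr rfl fun r _ => ?_
        ring
    _ = _ := by simp_rw [← add_pow, neg_add_eq_sub]

lemma four_mul_alpha' {N i : ℕ} (hN : 2 ≤ N) (hi : i < N) :
    4 * (alpha' N i : ℂ) =
      -((1 + I) ^ (N - i) * (1 - I) ^ i + (1 - I) ^ (N - i) * (1 + I) ^ i) := by
  have hNi : N - i ≠ 0 := by omega
  unfold alpha'
  split_ifs with h0
  · subst h0
    have h2 : (4 : ℂ) * 2 ^ (N - 2) = 2 ^ N := by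
      rw [← pow_sub_mul_pow 2 hN]; ring
    push_cast
    rw [mul_sub, four_mul_alpha (Nat.zero_le N), h2]
    simp [sum_range_succ, zero_pow (by omega : N ≠ 0), one_add_one_eq_two, sub_eq_add_neg,
      add_comm, add_left_comm, add_assoc]
  · rw [four_mul_alpha hi.le]
    simp [sum_range_succ, zero_pow h0, zero_pow hNi, sub_eq_add_neg, add_comm]

def sign4 (q : ℕ) : ℤ := if q % 4 = 0 ∨ q % 4 = 3 then 1 else -1

lemma re_I_pow_mul_one_add_I (q : ℕ) : (I ^ q * (1 + I)).re = sign4 q := by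
  rw [I_pow_eq_pow_mod, sign4]
  have := Nat.mod_lt q four_pos
  interval_cases q % 4 <;> simp

lemma one_add_I_pow_mul_one_sub_I_pow (i q : ℕ) :
    (1 + I) ^ (i + (2 * q + 1)) * (1 - I) ^ i = 2 ^ (i + q) * (I ^ q * (1 + I)) := by
  have h₁ : (1 + I) * (1 - I) = 2 := by linear_combination -I_sq
  have h₂ : (1 + I) ^ 2 = 2 * I := by linear_combination I_sq
  calc (1 + I) ^ (i + (2 * q + 1)) * (1 - I) ^ i
      = ((1 + I) * (1 - I)) ^ i * ((1 + I) ^ 2) ^ q * (1 + I) := by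
        rw [mul_pow, ← pow_mul, pow_add, pow_succ]; ring
    _ = _ := by rw [h₁, h₂]; ring

lemma I_pow_mul_one_add_I_add_conj (q : ℕ) :
    I ^ q * (1 + I) + conj (I ^ q * (1 + I)) = 2 * sign4 q := by
  rw [add_conj, re_I_pow_mul_one_add_I]
  push_cast
  rfl

lemma alpha'_eq {N i : ℕ} (hN : 3 ≤ N) (hodd : Odd N) (hi : i ≤ (N - 1) / 2) :
    alpha' N i = -(2 ^ ((N - 3) / 2) * sign4 ((N - 1) / 2 - i)) := by
  obtain ⟨k, rfl⟩ := hodd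
  set q := (2 * k + 1 - 1) / 2 - i
  have hsplit : 2 * k + 1 - i = i + (2 * q + 1) := by omega
  have hconj : (1 - I) ^ (i + (2 * q + 1)) * (1 + I) ^ i
      = conj ((1 + I) ^ (i + (2 * q + 1)) * (1 - I) ^ i) := by
    have hc : conj (1 + I) = 1 - I := by simp [conj_I, sub_eq_add_neg]
    rw [map_mul, map_pow, map_pow, hc, ← hc, Complex.conj_conj]
  have hpow : (2 : ℂ) ^ (i + q) * 2 = 4 * 2 ^ (k - 1) := by
    rw [show i + q = k - 1 + 1 by omega]; ring
  have h4 := four_mul_alpha' (N := 2 * k + 1) (i := i) (by omega) (by omega)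
  rw [hsplit, hconj, one_add_I_pow_mul_one_sub_I_pow, map_mul, map_pow, map_ofNat, ← mul_add,
    I_pow_mul_one_add_I_add_conj] at h4
  rw [show (2 * k + 1 - 3) / 2 = k - 1 by omega]
  apply Int.cast_injective (α := ℂ)
  push_cast
  linear_combination h4 / 4 - sign4 q * hpow / 4

lemma sqrt_two_mul_exp_eq_I_pow_mul_one_add_I (k : ℕ) :
    (Real.sqrt 2 : ℂ) * exp (↑(Real.pi * (2 * k + 1) / 4) * I) = I ^ k * (1 + I) := by
  have harg : (↑(Real.pi * (2 * k + 1) / 4) * I : ℂ)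
      = k * (Real.pi / 2 * I) + ↑(Real.pi / 4) * I := by
    push_cast; ring
  have hsqrt : (Real.sqrt 2 : ℂ) * (Real.sqrt 2 : ℂ) = 2 := by
    rw [← ofReal_mul, Real.mul_self_sqrt zero_le_two]; norm_num
  rw [harg, exp_add, exp_nat_mul, exp_pi_div_two_mul_I, exp_mul_I, ← ofReal_cos, ← ofReal_sin,
    Real.cos_pi_div_four, Real.sin_pi_div_four]
  push_cast
  linear_combination (I ^ k * (1 + I) / 2) * hsqrt

lemma hN_eq {N : ℕ} (hodd : Odd N) : hN N = -sign4 ((N - 1) / 2) := by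
  obtain ⟨k, rfl⟩ := hodd
  have harg : Real.pi * ((2 * k + 1 : ℕ) + 4) / 4 = Real.pi * (2 * k + 1) / 4 + Real.pi := by
    push_cast; ring
  rw [hN, harg, Real.cos_add_pi, show (2 * k + 1 - 1) / 2 = k by omega, ← re_I_pow_mul_one_add_I,
    ← sqrt_two_mul_exp_eq_I_pow_mul_one_add_I, re_ofReal_mul, exp_ofReal_mul_I_re]
  ring

lemma beta_eq {N i : ℕ} (hodd : Odd N) (hi : i ≤ (N - 1) / 2) :
    beta N i = sign4 ((N - 1) / 2) * sign4 ((N - 1) / 2 - i) := by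
  obtain ⟨k, rfl⟩ := hodd
  simp only [beta, sign4, neg_one_pow_eq_ite, Nat.odd_iff, Nat.even_iff]
  push_cast
  split_ifs <;> norm_num <;> omega

/-- The coefficient vectors `(β_i)` and `(h_N·α_i')` are proportional, with
proportionality constant `2^{(N-3)/2}`:  `β_i = 2^{-(N-3)/2}·h_N·α_i'`. -/
theorem beta_proportional_alpha' (N : ℕ) (hN3 : 3 ≤ N) (hodd : Odd N) :
    ∀ i : ℕ, i ≤ (N - 1) / 2 →
      beta N i = (2 : ℝ) ^ (-(((N - 3) / 2 : ℕ) : ℤ)) * (hN N * (alpha' N i : ℝ)) := by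
  intro i hi
  rw [beta_eq hodd hi, hN_eq hodd, alpha'_eq hN3 hodd hi, zpow_neg, zpow_natCast]
  push_cast
  field_simp
end
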